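/- arXiv:1612.02622 — 2 statements merged into one kernel-verified Lean document; each statement's English description precedes it below -/
import Mathlib

section
/- For x ≥ 1, the number of Gaussian integers n with |n| ≤ x equals πx² + O(x); that is, there is an absolute constant C such that |#{n ∈ ℤ[i] : |n| ≤ x} − πx²| ≤ Cx for all x ≥ 1. -/
/-! Send `z ∈ ℂ` to the Gaussian integer `⌊Re z⌋ + ⌊Im z⌋ i`. Its fibres are half-open unit
squares, each within distance `2` of its lattice point, so the number of lattice points in the
disc of radius `x` is the area of a union of unit squares that contains the disc of radius
`x - 2` and lies in the disc of radius `x + 2`. -/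

open Real Complex MeasureTheory
open scoped ENNReal

local notation "ℤ[i]" => GaussianInt

instance : Countable ℤ[i] :=
  Function.Injective.countable (f := fun n : ℤ[i] => (n.re, n.im))
    fun _ _ h => Zsqrtd.ext (congrArg Prod.fst h) (congrArg Prod.snd h)

noncomputable def gaussianFloor (z : ℂ) : ℤ[i] := ⟨⌊z.re⌋, ⌊z.im⌋⟩

lemma gaussianFloor_preimage_singleton (n : ℤ[i]) :
    gaussianFloor ⁻¹' {n} = measurableEquivRealProd ⁻¹'
      (Set.Ico (n.re : ℝ) (n.re + 1) ×ˢ Set.Ico (n.im : ℝ) (n.im + 1)) := by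
  ext z
  simp [gaussianFloor, Zsqrtd.ext_iff, Int.floor_eq_iff, measurableEquivRealProd_apply]

lemma measurableSet_gaussianFloor_preimage_singleton (n : ℤ[i]) :
    MeasurableSet (gaussianFloor ⁻¹' {n}) := by
  rw [gaussianFloor_preimage_singleton]
  exact measurableEquivRealProd.measurable (measurableSet_Ico.prod measurableSet_Ico)

lemma volume_gaussianFloor_preimage_singleton (n : ℤ[i]) :
    volume (gaussianFloor ⁻¹' {n}) = 1 := by
  rw [gaussianFloor_preimage_singleton,
    volume_preserving_equiv_real_prod.measure_preimage
      (measurableSet_Ico.prod measurableSet_Ico).nullMeasurableSet,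
    Measure.volume_eq_prod, Measure.prod_prod, Real.volume_Ico, Real.volume_Ico]
  simp

lemma volume_gaussianFloor_preimage (s : Set ℤ[i]) :
    volume (gaussianFloor ⁻¹' s) = s.encard := by
  rw [← tsum_measure_preimage_singleton s.to_countable
    fun n _ => measurableSet_gaussianFloor_preimage_singleton n]
  simp only [volume_gaussianFloor_preimage_singleton, ENNReal.tsum_one, Set.encard]

lemma natCard_eq_volume_real_gaussianFloor_preimage (s : Set ℤ[i])
    (hs : volume (gaussianFloor ⁻¹' s) ≠ ∞) :
    (Nat.card s : ℝ) = volume.real (gaussianFloor ⁻¹' s) := by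
  rw [volume_gaussianFloor_preimage, ENat.toENNReal_ne_top, Set.encard_ne_top_iff] at hs
  rw [Measure.real, volume_gaussianFloor_preimage, ← hs.cast_ncard_eq, Nat.card_coe_set_eq]
  simp

lemma norm_sub_gaussianFloor_lt (z : ℂ) : ‖z - gaussianFloor z‖ < 2 :=
  calc ‖z - gaussianFloor z‖
      ≤ |(z - gaussianFloor z).re| + |(z - gaussianFloor z).im| := norm_le_abs_re_add_abs_im _
    _ = Int.fract z.re + Int.fract z.im := by
        simp [gaussianFloor, Int.fract_nonneg, abs_of_nonneg]
    _ < 1 + 1 := add_lt_add (Int.fract_lt_one _) (Int.fract_lt_one _)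
    _ = 2 := one_add_one_eq_two

lemma closedBall_sub_two_subset_gaussianFloor_preimage (x : ℝ) :
    Metric.closedBall 0 (x - 2) ⊆ gaussianFloor ⁻¹' {n | ‖(n : ℂ)‖ ≤ x} := by
  intro z hz
  rw [mem_closedBall_zero_iff] at hz
  have := norm_sub_gaussianFloor_lt z
  calc ‖(gaussianFloor z : ℂ)‖ ≤ ‖z‖ + ‖z - gaussianFloor z‖ := norm_le_norm_add_norm_sub _ _
    _ ≤ x := by linarith

lemma gaussianFloor_preimage_subset_closedBall_add_two (x : ℝ) :
    gaussianFloor ⁻¹' {n | ‖(n : ℂ)‖ ≤ x} ⊆ Metric.closedBall 0 (x + 2) := by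
  intro z (hz : ‖(gaussianFloor z : ℂ)‖ ≤ x)
  have := norm_sub_gaussianFloor_lt z
  rw [mem_closedBall_zero_iff]
  calc ‖z‖ ≤ ‖(gaussianFloor z : ℂ)‖ + ‖z - gaussianFloor z‖ := norm_le_norm_add_norm_sub' _ _
    _ ≤ x + 2 := by linarith

lemma volume_real_closedBall_complex {r : ℝ} (hr : 0 ≤ r) :
    volume.real (Metric.closedBall (0 : ℂ) r) = π * r ^ 2 := by
  simp [Measure.real, Complex.volume_closedBall, ENNReal.toReal_ofReal hr, mul_comm]

lemma volume_gaussianFloor_preimage_norm_le_ne_top (x : ℝ) :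
    volume (gaussianFloor ⁻¹' {n | ‖(n : ℂ)‖ ≤ x}) ≠ ∞ :=
  ((measure_mono (gaussianFloor_preimage_subset_closedBall_add_two x)).trans_lt
    measure_closedBall_lt_top).ne

lemma natCard_norm_le_eq_volume_real (x : ℝ) :
    (Nat.card {n : ℤ[i] // ‖(n : ℂ)‖ ≤ x} : ℝ) =
      volume.real (gaussianFloor ⁻¹' {n | ‖(n : ℂ)‖ ≤ x}) :=
  natCard_eq_volume_real_gaussianFloor_preimage _ (volume_gaussianFloor_preimage_norm_le_ne_top x)

lemma natCard_norm_le_le (x : ℝ) (hx : 0 ≤ x) :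
    (Nat.card {n : ℤ[i] // ‖(n : ℂ)‖ ≤ x} : ℝ) ≤ π * (x + 2) ^ 2 := by
  rw [natCard_norm_le_eq_volume_real, ← volume_real_closedBall_complex (by linarith)]
  exact measureReal_mono (gaussianFloor_preimage_subset_closedBall_add_two x)
    measure_closedBall_lt_top.ne

lemma le_natCard_norm_le (x : ℝ) (hx : 2 ≤ x) :
    π * (x - 2) ^ 2 ≤ (Nat.card {n : ℤ[i] // ‖(n : ℂ)‖ ≤ x} : ℝ) := by
  rw [natCard_norm_le_eq_volume_real, ← volume_real_closedBall_complex (by linarith)]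
  exact measureReal_mono (closedBall_sub_two_subset_gaussianFloor_preimage x)
    (volume_gaussianFloor_preimage_norm_le_ne_top x)

theorem stmt_6 :
    ∃ C : ℝ, 0 < C ∧ ∀ x : ℝ, 1 ≤ x →
      |(Nat.card {n : GaussianInt // ‖GaussianInt.toComplex n‖ ≤ x} : ℝ)
        - π * x ^ 2| ≤ C * x := by
  refine ⟨8 * π, by positivity, fun x hx => abs_le.2 ⟨?_, ?_⟩⟩
  · rcases le_total 2 x with h2 | h2
    · nlinarith [le_natCard_norm_le x h2, pi_pos]
    · have : π * x ^ 2 ≤ π * (8 * x) := by gcongr; nlinarith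
      linarith [(Nat.card {n : ℤ[i] // ‖(n : ℂ)‖ ≤ x}).cast_nonneg (α := ℝ)]
  · nlinarith [natCard_norm_le_le x (by linarith), pi_pos]
end

section
/- Let κ ∈ ℂ and 0 < x̃ < x. Then |∑_{n ∈ ℤ[i], x̃ < |n| ≤ x} e(Im(nκ))| ≪ x · min(‖Im(κ)‖_ℝ^{−1}, x)^{1/2} · min(‖Re(κ)‖_ℝ^{−1}, x)^{1/2}, with an absolute implied constant. -/
/-! Write `n = a + bi` and `κ = u + vi`, so that `e(Im(nκ)) = e(av) e(bu)`. The annulus is the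
difference of two lattice discs (both equal to `{0}` when `x < 1`), and for `x ≥ 1` a disc of
radius `r ≤ x` is a union of at most `3x` rows `{a} × [-k, k]` with `2k + 1 ≤ 3x`. Along a row
the sum is a geometric series in `e(u)`, and `|e(u) - 1| = 2|sin πu| ≥ 4‖u‖`, so each row
contributes `≪ min(‖u‖⁻¹, x)`. Exchanging the roles of `a` and `b` gives the same bound with `v`,
and `min(A, B) ≤ √(AB)`. -/

open Real Complex

/-- Distance from a real number to the nearest integer. -/
noncomputable def distNearestInt (x : ℝ) : ℝ := ⨅ m : ℤ, |x - (m : ℝ)|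

/-- `min(‖y‖_ℝ^{-1}, x)`, with the convention that the value is `x` when `‖y‖_ℝ = 0`. -/
noncomputable def minInvDist (y x : ℝ) : ℝ :=
  if distNearestInt y = 0 then x else min (distNearestInt y)⁻¹ x

open Finset

lemma distNearestInt_eq_abs_sub_round (y : ℝ) : distNearestInt y = |y - round y| :=
  le_antisymm (ciInf_le ⟨0, by rintro _ ⟨m, rfl⟩; positivity⟩ (round y))
    (le_ciInf fun m => round_le y m)

lemma distNearestInt_nonneg (y : ℝ) : 0 ≤ distNearestInt y := by
  rw [distNearestInt_eq_abs_sub_round]; positivity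

lemma minInvDist_nonneg (y : ℝ) {x : ℝ} (hx : 0 ≤ x) : 0 ≤ minInvDist y x := by
  unfold minInvDist
  split_ifs
  exacts [hx, le_min (inv_nonneg.2 (distNearestInt_nonneg y)) hx]

lemma minInvDist_mul_le (y : ℝ) {c : ℝ} (hc : 1 ≤ c) (x : ℝ) :
    minInvDist y (c * x) ≤ c * minInvDist y x := by
  unfold minInvDist
  split_ifs
  · rfl
  · rw [mul_min_of_nonneg _ _ (by linarith)]
    exact min_le_min_right _
      (le_mul_of_one_le_left (inv_nonneg.2 (distNearestInt_nonneg y)) hc)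

lemma min_le_sqrt_mul_sqrt {a b : ℝ} (ha : 0 ≤ a) (hb : 0 ≤ b) : min a b ≤ √a * √b := by
  rw [← Real.sqrt_mul ha, ← Real.sqrt_mul_self (le_min ha hb)]
  exact Real.sqrt_le_sqrt (mul_le_mul (min_le_left a b) (min_le_right a b) (le_min ha hb) ha)

lemma norm_exp_two_pi_I_mul (u : ℝ) : ‖exp (2 * π * I * u)‖ = 1 := by
  rw [norm_exp]; simp

lemma four_mul_distNearestInt_le_norm_exp_sub_one (u : ℝ) :
    4 * distNearestInt u ≤ ‖exp (2 * π * I * u) - 1‖ := by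
  set r := u - round u
  have hr : |r| ≤ 1 / 2 := abs_sub_round u
  have hperiodic : exp (2 * π * I * u) = exp (I * ↑(2 * π * r)) := by
    rw [show (2 * π * I * u : ℂ) = I * ↑(2 * π * r) + (round u : ℤ) * (2 * π * I) by
        push_cast [r]; ring, Complex.exp_add, exp_int_mul_two_pi_mul_I, mul_one]
  have hjordan : 2 / π * |π * r| ≤ |Real.sin (π * r)| :=
    Real.mul_abs_le_abs_sin (by rw [abs_mul, abs_of_pos pi_pos]; nlinarith [pi_pos])
  rw [hperiodic, norm_exp_I_mul_ofReal_sub_one, distNearestInt_eq_abs_sub_round, norm_mul,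
    Real.norm_eq_abs, Real.norm_eq_abs, abs_two, show 2 * π * r / 2 = π * r by ring]
  rw [abs_mul, abs_of_pos pi_pos] at hjordan
  have hπ := pi_pos
  calc 4 * |r| = 2 * (2 / π * (π * |r|)) := by field_simp; ring
    _ ≤ 2 * |Real.sin (π * r)| := by gcongr

lemma geom_sum_Icc_zpow_mul_sub_one {K : Type*} [Field K] {z : K} (hz : z ≠ 0) {m n : ℤ}
    (hmn : m ≤ n) : (∑ b ∈ Icc m n, z ^ b) * (z - 1) = z ^ (n + 1) - z ^ m := by
  induction n, hmn using Int.leInduction with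
  | base => rw [Icc_self, sum_singleton, zpow_add_one₀ hz]; ring
  | succ n hmn ih =>
    rw [← insert_Icc_right_eq_Icc_add_one (by omega), sum_insert (by simp), add_mul, ih,
      zpow_add_one₀ hz (n + 1)]
    ring

lemma norm_sum_Icc_zpow_mul_norm_sub_one_le {K : Type*} [NormedField K] {z : K} (hz : ‖z‖ = 1)
    (m n : ℤ) : ‖∑ b ∈ Icc m n, z ^ b‖ * ‖z - 1‖ ≤ 2 := by
  rcases lt_or_ge n m with hnm | hmn
  · simp [Icc_eq_empty_of_lt hnm]
  rw [← norm_mul, geom_sum_Icc_zpow_mul_sub_one (norm_pos_iff.1 (hz ▸ one_pos)) hmn]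
  calc ‖z ^ (n + 1) - z ^ m‖ ≤ ‖z ^ (n + 1)‖ + ‖z ^ m‖ := norm_sub_le _ _
    _ = 2 := by rw [norm_zpow, norm_zpow, hz, one_zpow, one_zpow]; norm_num

lemma norm_sum_Icc_exp_le_minInvDist (u : ℝ) {N : ℝ} {m n : ℤ} (hN : (#(Icc m n) : ℝ) ≤ N) :
    ‖∑ b ∈ Icc m n, exp (2 * π * I * u) ^ b‖ ≤ minInvDist u N := by
  have htrivial : ‖∑ b ∈ Icc m n, exp (2 * π * I * u) ^ b‖ ≤ N := by
    refine (norm_sum_le _ _).trans (le_of_eq_of_le ?_ hN)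
    simp [norm_zpow, norm_exp_two_pi_I_mul]
  unfold minInvDist
  split_ifs with hd
  · exact htrivial
  refine le_min ?_ htrivial
  have hd : 0 < distNearestInt u := (distNearestInt_nonneg u).lt_of_ne' hd
  have hgeom := norm_sum_Icc_zpow_mul_norm_sub_one_le (norm_exp_two_pi_I_mul u) m n
  have hsep := four_mul_distNearestInt_le_norm_exp_sub_one u
  rw [← one_div, le_div_iff₀ hd]
  nlinarith [norm_nonneg (∑ b ∈ Icc m n, exp (2 * π * I * u) ^ b)]

lemma card_Icc_neg_le {K : ℤ} {y : ℝ} (hy : 0 ≤ y) (hK : (K : ℝ) ≤ y) :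
    (#(Icc (-K) K) : ℝ) ≤ 2 * y + 1 := by
  have hcard : ((#(Icc (-K) K) : ℤ) : ℝ) = max (2 * K + 1 : ℤ) 0 := by
    rw [Int.card_Icc, Int.toNat_eq_max]; ring_nf
  push_cast at hcard
  rw [hcard]
  exact max_le (by linarith) (by linarith)

lemma filter_Icc_sq_le_eq_Icc {c : ℝ} (hc : 0 ≤ c) {K : ℤ} (hK : ⌊√c⌋ ≤ K) :
    {b ∈ Icc (-K) K | ((b : ℤ) : ℝ) ^ 2 ≤ c} = Icc (-⌊√c⌋) ⌊√c⌋ := by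
  have hsq : ∀ b : ℤ, (b : ℝ) ^ 2 ≤ c ↔ |b| ≤ ⌊√c⌋ := fun b => by
    rw [Int.le_floor, Int.cast_abs, ← Real.sqrt_le_sqrt_iff hc, Real.sqrt_sq_eq_abs]
  ext b
  simp only [mem_filter, mem_Icc, hsq, abs_le]
  omega

noncomputable def latticeDisc (r : ℝ) : Finset (ℤ × ℤ) :=
  {p ∈ Icc (-⌊r⌋) ⌊r⌋ ×ˢ Icc (-⌊r⌋) ⌊r⌋ | (p.1 : ℝ) ^ 2 + (p.2 : ℝ) ^ 2 ≤ r ^ 2}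

lemma abs_le_floor_of_sq_le_sq {a : ℤ} {r : ℝ} (hr : 0 ≤ r) (h : (a : ℝ) ^ 2 ≤ r ^ 2) :
    |a| ≤ ⌊r⌋ := by
  rw [Int.le_floor, Int.cast_abs]
  exact abs_le_of_sq_le_sq' h hr |> abs_le.2

lemma mem_latticeDisc {r : ℝ} (hr : 0 ≤ r) {p : ℤ × ℤ} :
    p ∈ latticeDisc r ↔ (p.1 : ℝ) ^ 2 + (p.2 : ℝ) ^ 2 ≤ r ^ 2 := by
  refine ⟨fun h => (mem_filter.1 h).2, fun h => mem_filter.2 ⟨?_, h⟩⟩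
  have h1 := abs_le_floor_of_sq_le_sq hr (a := p.1) (by nlinarith [sq_nonneg (p.2 : ℝ)])
  have h2 := abs_le_floor_of_sq_le_sq hr (a := p.2) (by nlinarith [sq_nonneg (p.1 : ℝ)])
  rw [abs_le] at h1 h2
  simp only [mem_product, mem_Icc]
  exact ⟨h1, h2⟩

lemma latticeDisc_mono {r s : ℝ} (hr : 0 ≤ r) (hrs : r ≤ s) : latticeDisc r ⊆ latticeDisc s :=
  fun _ hp => (mem_latticeDisc (hr.trans hrs)).2 <|
    ((mem_latticeDisc hr).1 hp).trans (pow_le_pow_left₀ hr hrs 2)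

lemma latticeDisc_of_lt_one {r : ℝ} (hr : 0 ≤ r) (hr1 : r < 1) : latticeDisc r = {(0, 0)} := by
  have hfloor : ⌊r⌋ = 0 := Int.floor_eq_zero_iff.2 ⟨hr, hr1⟩
  ext p
  simp only [latticeDisc, hfloor, neg_zero, Icc_self, singleton_product_singleton,
    mem_filter, mem_singleton, and_iff_left_iff_imp]
  rintro rfl
  simpa using sq_nonneg r

lemma sum_latticeDisc_eq_sum_rows {M : Type*} [AddCommMonoid M] (g : ℤ → ℤ → M) {r : ℝ}
    (hr : 0 ≤ r) :
    ∑ p ∈ latticeDisc r, g p.1 p.2 =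
      ∑ a ∈ Icc (-⌊r⌋) ⌊r⌋, ∑ b ∈ Icc (-⌊√(r ^ 2 - a ^ 2)⌋) ⌊√(r ^ 2 - a ^ 2)⌋, g a b := by
  rw [latticeDisc, sum_filter, sum_product]
  refine sum_congr rfl fun a ha => ?_
  have ha' : (a : ℝ) ^ 2 ≤ r ^ 2 := by
    rw [mem_Icc, ← abs_le, ← Int.cast_le (R := ℝ), Int.cast_abs] at ha
    rw [← sq_abs]
    exact pow_le_pow_left₀ (abs_nonneg _) (ha.trans (Int.floor_le r)) 2
  rw [← filter_Icc_sq_le_eq_Icc (by linarith) ?_, sum_filter]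
  · refine sum_congr rfl fun b _ => ?_
    simp only [le_sub_iff_add_le']
  · exact Int.floor_mono ((Real.sqrt_le_sqrt (by nlinarith)).trans_eq (Real.sqrt_sq hr))

lemma sum_latticeDisc_swap {M : Type*} [AddCommMonoid M] (g : ℤ × ℤ → M) (r : ℝ) :
    ∑ p ∈ latticeDisc r, g p.swap = ∑ p ∈ latticeDisc r, g p :=
  sum_nbij' Prod.swap Prod.swap (by simp [latticeDisc, add_comm, and_comm]) 
    (by simp [latticeDisc, add_comm, and_comm]) (by simp) (by simp) (by simp)

lemma norm_sum_latticeDisc_le (u v : ℝ) {r x : ℝ} (hr : 0 ≤ r) (hrx : r ≤ x) (hx : 1 ≤ x) :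
    ‖∑ p ∈ latticeDisc r, exp (2 * π * I * v) ^ p.1 * exp (2 * π * I * u) ^ p.2‖ ≤
      9 * x * minInvDist u x := by
  rw [sum_latticeDisc_eq_sum_rows
    (fun a b => exp (2 * π * I * v) ^ a * exp (2 * π * I * u) ^ b) hr]
  have hrow : ∀ a ∈ Icc (-⌊r⌋) ⌊r⌋,
      ‖∑ b ∈ Icc (-⌊√(r ^ 2 - a ^ 2)⌋) ⌊√(r ^ 2 - a ^ 2)⌋,
        exp (2 * π * I * v) ^ a * exp (2 * π * I * u) ^ b‖ ≤ 3 * minInvDist u x := by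
    intro a _
    rw [← mul_sum, norm_mul, norm_zpow, norm_exp_two_pi_I_mul, one_zpow, one_mul]
    refine (norm_sum_Icc_exp_le_minInvDist u ?_).trans (minInvDist_mul_le u (by norm_num) x)
    have hsqrt : √(r ^ 2 - a ^ 2) ≤ r :=
      (Real.sqrt_le_sqrt (by nlinarith)).trans_eq (Real.sqrt_sq hr)
    linarith [card_Icc_neg_le (Real.sqrt_nonneg _) (Int.floor_le √(r ^ 2 - a ^ 2))]
  calc _ ≤ ∑ a ∈ Icc (-⌊r⌋) ⌊r⌋, 3 * minInvDist u x := (norm_sum_le _ _).trans (sum_le_sum hrow)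
    _ = #(Icc (-⌊r⌋) ⌊r⌋) * (3 * minInvDist u x) := by rw [sum_const, nsmul_eq_mul]
    _ ≤ (3 * x) * (3 * minInvDist u x) := by
        have hcard := card_Icc_neg_le hr (Int.floor_le r)
        have hM := minInvDist_nonneg u (by linarith : 0 ≤ x)
        gcongr
        linarith
    _ = 9 * x * minInvDist u x := by ring

lemma norm_sum_latticeDisc_le_min (u v : ℝ) {r x : ℝ} (hr : 0 ≤ r) (hrx : r ≤ x) (hx : 1 ≤ x) :
    ‖∑ p ∈ latticeDisc r, exp (2 * π * I * v) ^ p.1 * exp (2 * π * I * u) ^ p.2‖ ≤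
      9 * x * min (minInvDist u x) (minInvDist v x) := by
  rw [mul_min_of_nonneg _ _ (by linarith)]
  refine le_min (norm_sum_latticeDisc_le u v hr hrx hx) ?_
  have hswapped := norm_sum_latticeDisc_le v u hr hrx hx
  rw [← sum_latticeDisc_swap] at hswapped
  simpa only [Prod.fst_swap, Prod.snd_swap, mul_comm] using hswapped

def prodEquivGaussianInt : ℤ × ℤ ≃ GaussianInt where
  toFun p := ⟨p.1, p.2⟩
  invFun n := (n.re, n.im)
  left_inv _ := rfl
  right_inv _ := rfl

lemma norm_toComplex (n : GaussianInt) :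
    ‖GaussianInt.toComplex n‖ = √((n.re : ℝ) ^ 2 + (n.im : ℝ) ^ 2) := by
  rw [Complex.norm_def, normSq_apply, GaussianInt.toComplex_def₂, sq, sq]

lemma tsum_annulus_eq_sub {M : Type*} [AddCommGroup M] [TopologicalSpace M] (g : ℤ → ℤ → M)
    {xt x : ℝ} (hxt : 0 ≤ xt) (hx : xt ≤ x) :
    ∑' n : {n : GaussianInt //
        xt < ‖GaussianInt.toComplex n‖ ∧ ‖GaussianInt.toComplex n‖ ≤ x}, g n.1.re n.1.im =
      ∑ p ∈ latticeDisc x, g p.1 p.2 - ∑ p ∈ latticeDisc xt, g p.1 p.2 := by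
  have hmem : ∀ p, p ∈ latticeDisc x \ latticeDisc xt ↔
      xt < ‖GaussianInt.toComplex (prodEquivGaussianInt p)‖ ∧
        ‖GaussianInt.toComplex (prodEquivGaussianInt p)‖ ≤ x := fun p => by
    rw [mem_sdiff, mem_latticeDisc (hxt.trans hx), mem_latticeDisc hxt, norm_toComplex,
      Real.lt_sqrt hxt, Real.sqrt_le_left (hxt.trans hx), not_le, and_comm]
    rfl
  rw [← ((prodEquivGaussianInt.subtypeEquiv hmem).tsum_eq fun n => g n.1.re n.1.im),
    ← sum_sdiff_eq_sub (latticeDisc_mono hxt hx)]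
  exact Finset.tsum_subtype (latticeDisc x \ latticeDisc xt) fun p : ℤ × ℤ => g p.1 p.2

lemma exp_two_pi_I_mul_im_mul (n : GaussianInt) (κ : ℂ) :
    exp (2 * π * I * (GaussianInt.toComplex n * κ).im) =
      exp (2 * π * I * κ.im) ^ n.re * exp (2 * π * I * κ.re) ^ n.im := by
  rw [← exp_int_mul, ← exp_int_mul, ← Complex.exp_add]
  congr 1
  simp only [mul_im, GaussianInt.toComplex_def₂]
  push_cast
  ring

theorem stmt_9 :
    ∃ C : ℝ, 0 < C ∧ ∀ κ : ℂ, ∀ xt x : ℝ, 0 < xt → xt < x →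
      ‖(∑' n : {n : GaussianInt //
          xt < ‖(GaussianInt.toComplex n)‖ ∧
          ‖(GaussianInt.toComplex n)‖ ≤ x},
        Complex.exp (2 * π * Complex.I * ((GaussianInt.toComplex n.1 * κ).im)))‖ ≤
      C * x * Real.sqrt (minInvDist κ.im x) * Real.sqrt (minInvDist κ.re x) := by
  refine ⟨18, by norm_num, fun κ xt x hxt hx => ?_⟩
  simp_rw [exp_two_pi_I_mul_im_mul]
  rw [tsum_annulus_eq_sub (fun a b => exp (2 * π * I * κ.im) ^ a * exp (2 * π * I * κ.re) ^ b)
    hxt.le hx.le]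
  have hx0 : 0 ≤ x := (hxt.trans hx).le
  rcases lt_or_ge x 1 with hx1 | hx1
  · rw [latticeDisc_of_lt_one hxt.le (hx.trans hx1), latticeDisc_of_lt_one (hxt.trans hx).le hx1,
      sub_self, norm_zero]
    positivity
  calc _ ≤ _ := norm_sub_le _ _
    _ ≤ 9 * x * min (minInvDist κ.re x) (minInvDist κ.im x) +
        9 * x * min (minInvDist κ.re x) (minInvDist κ.im x) :=
      add_le_add (norm_sum_latticeDisc_le_min _ _ hx0 le_rfl hx1)
        (norm_sum_latticeDisc_le_min _ _ hxt.le hx.le hx1)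
    _ = 18 * x * min (minInvDist κ.re x) (minInvDist κ.im x) := by ring
    _ ≤ 18 * x * (√(minInvDist κ.re x) * √(minInvDist κ.im x)) := by
      gcongr
      exact min_le_sqrt_mul_sqrt (minInvDist_nonneg _ hx0) (minInvDist_nonneg _ hx0)
    _ = _ := by ring
end
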